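/- Let X be any real random variable with half-space depth q(x) = min{P(X ≤ x), P(X ≥ x)}. For every p ∈ (−1, 0), one has 1 ≤ E[q(X)^p] ≤ (2^p (p+1))^{-1}. -/

import Mathlib

open MeasureTheory Set

/-- One-dimensional half-space depth of a random variable `X` (defined on `(Ω, ℙ)`):
`q(x) = min {P(X ≤ x), P(X ≥ x)}`. -/
noncomputable def depth1 {Ω : Type*} [MeasurableSpace Ω] (ℙ : Measure Ω) (X : Ω → ℝ)
    (x : ℝ) : ℝ :=
  min (ℙ {ω | X ω ≤ x}).toReal (ℙ {ω | x ≤ X ω}).toReal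

/-! `P(F(X) < t) ≤ t` for the distribution function `F(x) = P(X ≤ x)`, and likewise for
`Z(x) = P(X ≥ x)`, so `P(q(X) < u) ≤ 2u`: `q(X)` stochastically dominates the uniform law on
`[0, 1/2]`. As `t ↦ t^p` is decreasing, the layer-cake formula then bounds `E[q(X)^p]` by the
`p`-th moment `2^{-p}/(p+1)` of that uniform law. The same tail bound gives `q(X) > 0` a.s., and
`q ≤ 1`, so `q(X)^p ≥ 1` a.s. -/

open Filter Topology
open scoped ENNReal

/-- By inner regularity it suffices to bound compact subsets `K` of `{x | ν (Iic x) < t}`, and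
`K ⊆ Iic (sSup K)` with `sSup K ∈ K`. -/
theorem measure_setOf_measure_Iic_lt_le (ν : Measure ℝ) [IsFiniteMeasure ν] (t : ℝ≥0∞) :
    ν {x | ν (Iic x) < t} ≤ t := by
  have hA : MeasurableSet {x | ν (Iic x) < t} :=
    measurableSet_lt (Monotone.measurable fun x y hxy => measure_mono (Iic_subset_Iic.2 hxy))
      measurable_const
  rw [hA.measure_eq_iSup_isCompact]
  refine iSup₂_le fun K hKA => iSup_le fun hK => ?_
  rcases K.eq_empty_or_nonempty with rfl | hne
  · simp
  · calc ν K ≤ ν (Iic (sSup K)) := measure_mono fun x hx => le_csSup hK.bddAbove hx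
      _ ≤ t := (hKA (hK.sSup_mem hne)).le

theorem measure_setOf_measure_Ici_lt_le (ν : Measure ℝ) [IsFiniteMeasure ν] (t : ℝ≥0∞) :
    ν {x | ν (Ici x) < t} ≤ t := by
  set ν' := ν.map Neg.neg
  have hν' : ∀ x, ν' (Iic (-x)) = ν (Ici x) := fun x => by
    rw [Measure.map_apply measurable_neg measurableSet_Iic]; congr 1; ext y; simp
  calc ν {x | ν (Ici x) < t} = ν (Neg.neg ⁻¹' {y | ν' (Iic y) < t}) := by
        simp only [preimage_ofPred_eq, hν']
    _ ≤ ν' {y | ν' (Iic y) < t} := Measure.le_map_apply measurable_neg.aemeasurable _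
    _ ≤ t := measure_setOf_measure_Iic_lt_le ν' t

section Depth

variable {Ω : Type*} [MeasurableSpace Ω] (ℙ : Measure Ω)

theorem depth1_nonneg (X : Ω → ℝ) (x : ℝ) : 0 ≤ depth1 ℙ X x :=
  le_min ENNReal.toReal_nonneg ENNReal.toReal_nonneg

theorem depth1_le_one [IsZeroOrProbabilityMeasure ℙ] (X : Ω → ℝ) (x : ℝ) : depth1 ℙ X x ≤ 1 :=
  (min_le_left _ _).trans measureReal_le_one

theorem measurable_depth1 [IsFiniteMeasure ℙ] (X : Ω → ℝ) : Measurable (depth1 ℙ X) := by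
  have hF : Monotone fun x => (ℙ {ω | X ω ≤ x}).toReal := fun _ _ hxy =>
    measureReal_mono fun _ h => le_trans h hxy
  have hZ : Antitone fun x => (ℙ {ω | x ≤ X ω}).toReal := fun _ _ hxy =>
    measureReal_mono fun _ h => le_trans hxy h
  exact hF.measurable.min hZ.measurable

theorem measure_depth1_comp_lt_le [IsFiniteMeasure ℙ] {X : Ω → ℝ} (hX : Measurable X) (u : ℝ) :
    ℙ {ω | depth1 ℙ X (X ω) < u} ≤ ENNReal.ofReal (2 * u) := by
  set ν := ℙ.map X
  have hlt : ∀ s, MeasurableSet s → (ℙ (X ⁻¹' s)).toReal < u → ν s < ENNReal.ofReal u :=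
    fun s hs h => by
      rwa [Measure.map_apply hX hs, ENNReal.lt_ofReal_iff_toReal_lt (measure_ne_top _ _)]
  have hsub : {ω | depth1 ℙ X (X ω) < u} ⊆
      X ⁻¹' {x | ν (Iic x) < ENNReal.ofReal u} ∪ X ⁻¹' {x | ν (Ici x) < ENNReal.ofReal u} := by
    intro ω hω
    rcases min_lt_iff.1 (mem_ofPred.1 hω) with h | h
    · exact Or.inl (hlt _ measurableSet_Iic h)
    · exact Or.inr (hlt _ measurableSet_Ici h)
  calc ℙ {ω | depth1 ℙ X (X ω) < u}
      ≤ ν {x | ν (Iic x) < ENNReal.ofReal u} + ν {x | ν (Ici x) < ENNReal.ofReal u} :=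
        (measure_mono hsub).trans <| (measure_union_le _ _).trans <|
          add_le_add (Measure.le_map_apply hX.aemeasurable _)
            (Measure.le_map_apply hX.aemeasurable _)
    _ ≤ ENNReal.ofReal u + ENNReal.ofReal u :=
        add_le_add (measure_setOf_measure_Iic_lt_le ν _) (measure_setOf_measure_Ici_lt_le ν _)
    _ = ENNReal.ofReal (2 * u) := by
        rw [ENNReal.ofReal_mul zero_le_two, ENNReal.ofReal_ofNat, two_mul]

end Depth

theorem lintegral_Ioi_ofReal_const_mul_rpow {a : ℝ} (ha : a < -1) {t₀ : ℝ} (ht₀ : 0 < t₀)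
    {c : ℝ} (hc : 0 ≤ c) :
    ∫⁻ t in Ioi t₀, ENNReal.ofReal (c * t ^ a) =
      ENNReal.ofReal (c * (-t₀ ^ (a + 1) / (a + 1))) := by
  rw [← ofReal_integral_eq_lintegral_ofReal ((integrableOn_Ioi_rpow_of_lt ha ht₀).const_mul c)
      ((ae_restrict_iff' measurableSet_Ioi).2 (ae_of_all _ fun t ht =>
        mul_nonneg hc (Real.rpow_nonneg (ht₀.trans ht).le _))),
    integral_const_mul, integral_Ioi_rpow_of_lt ha ht₀]

theorem setOf_lt_rpow_subset {Ω : Type*} {V : Ω → ℝ} (hV0 : ∀ ω, 0 ≤ V ω) {p t : ℝ} (hp : p < 0)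
    (ht : 0 < t) : {ω | t < V ω ^ p} ⊆ {ω | V ω < t ^ p⁻¹} := fun ω hω => by
  have hVpos : 0 < V ω := (hV0 ω).lt_of_ne fun h => by
    rw [mem_ofPred_eq, ← h, Real.zero_rpow hp.ne] at hω; exact ht.not_gt hω
  exact (Real.lt_rpow_inv_iff_of_neg hVpos ht hp).2 hω

theorem lintegral_rpow_le_of_measure_lt_le {Ω : Type*} [MeasurableSpace Ω] (μ : Measure Ω)
    [IsZeroOrProbabilityMeasure μ] {V : Ω → ℝ} (hV : Measurable V) (hV0 : ∀ ω, 0 ≤ V ω) {c p : ℝ}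
    (hc : 0 < c) (hp : p ∈ Ioo (-1 : ℝ) 0)
    (htail : ∀ u, μ {ω | V ω < u} ≤ ENNReal.ofReal (c * u)) :
    ∫⁻ ω, ENNReal.ofReal (V ω ^ p) ∂μ ≤ ENNReal.ofReal ((c ^ p * (p + 1))⁻¹) := by
  obtain ⟨hp1, hp0⟩ := hp
  -- `t₀` is where the tail bound `c * t ^ p⁻¹` of `{t < V ^ p}` crosses the trivial bound `1`.
  set t₀ := c ^ (-p) with ht₀_def
  have ht₀ : 0 < t₀ := by positivity
  have hexp : p⁻¹ < -1 := (inv_lt_of_neg hp0 (by norm_num)).2 (by simpa using hp1)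
  have hp_ne : p ≠ 0 := hp0.ne
  have hp1' : p + 1 ≠ 0 := by linarith
  have hinner : ∫⁻ t in Ioc 0 t₀, μ {ω | t < V ω ^ p} ≤ ENNReal.ofReal t₀ :=
    (setLIntegral_mono' measurableSet_Ioc fun _ _ => prob_le_one).trans (by simp)
  have houter : ∫⁻ t in Ioi t₀, μ {ω | t < V ω ^ p} ≤ ENNReal.ofReal (-p * t₀ / (p + 1)) :=
    calc _ ≤ ∫⁻ t in Ioi t₀, ENNReal.ofReal (c * t ^ p⁻¹) :=
          setLIntegral_mono' measurableSet_Ioi fun t ht =>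
            (measure_mono (setOf_lt_rpow_subset hV0 hp0 (ht₀.trans ht))).trans (htail _)
      _ = ENNReal.ofReal (c * (-t₀ ^ (p⁻¹ + 1) / (p⁻¹ + 1))) :=
          lintegral_Ioi_ofReal_const_mul_rpow hexp ht₀ hc.le
      _ = ENNReal.ofReal (-p * t₀ / (p + 1)) := by
          have : t₀ ^ (p⁻¹ + 1) = t₀ / c := by
            rw [Real.rpow_add ht₀, Real.rpow_one, ht₀_def, ← Real.rpow_mul hc.le,
              neg_mul, mul_inv_cancel₀ hp_ne, Real.rpow_neg_one]
            field_simp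
          rw [this, show p⁻¹ + 1 = (p + 1) / p by field_simp; ring]
          congr 1
          field_simp
  calc ∫⁻ ω, ENNReal.ofReal (V ω ^ p) ∂μ = ∫⁻ t in Ioi 0, μ {ω | t < V ω ^ p} :=
        lintegral_eq_lintegral_meas_lt μ (ae_of_all _ fun ω => Real.rpow_nonneg (hV0 ω) p)
          (hV.pow_const p).aemeasurable
    _ = (∫⁻ t in Ioc 0 t₀, μ {ω | t < V ω ^ p}) + ∫⁻ t in Ioi t₀, μ {ω | t < V ω ^ p} := by
        rw [← Ioc_union_Ioi_eq_Ioi ht₀.le, lintegral_union measurableSet_Ioi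
          (Ioc_disjoint_Ioi le_rfl)]
    _ ≤ ENNReal.ofReal t₀ + ENNReal.ofReal (-p * t₀ / (p + 1)) := add_le_add hinner houter
    _ = ENNReal.ofReal ((c ^ p * (p + 1))⁻¹) := by
        rw [← ENNReal.ofReal_add ht₀.le
          (div_nonneg (mul_nonneg (neg_nonneg.2 hp0.le) ht₀.le) (by linarith))]
        congr 1
        rw [ht₀_def, Real.rpow_neg hc.le]
        field_simp
        ring

theorem ae_pos_of_measure_lt_le {Ω : Type*} [MeasurableSpace Ω] (μ : Measure Ω) {V : Ω → ℝ}
    {c : ℝ} (htail : ∀ u, μ {ω | V ω < u} ≤ ENNReal.ofReal (c * u)) : ∀ᵐ ω ∂μ, 0 < V ω := by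
  have hlim : Tendsto (fun u => ENNReal.ofReal (c * u)) (𝓝[>] 0) (𝓝 0) := by
    simpa [Function.comp_def] using
      ((ENNReal.continuous_ofReal.comp (continuous_const_mul c)).tendsto 0).mono_left
        nhdsWithin_le_nhds
  refine ae_iff.2 (nonpos_iff_eq_zero.1 (ge_of_tendsto hlim ?_))
  exact eventually_nhdsWithin_of_forall fun u hu =>
    (measure_mono fun ω (h : ¬0 < V ω) => (not_lt.1 h).trans_lt hu).trans (htail u)

/-- For any real random variable `X` and any `p ∈ (−1,0)`,
`1 ≤ E[q(X)^p] ≤ (2^p (p+1))⁻¹`. -/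
theorem depth_neg_moments {Ω : Type*} [MeasurableSpace Ω]
    (ℙ : Measure Ω) [IsProbabilityMeasure ℙ] (X : Ω → ℝ) (hX : Measurable X)
    (p : ℝ) (hp : p ∈ Set.Ioo (-1 : ℝ) 0) :
    1 ≤ ∫ ω, (depth1 ℙ X (X ω)) ^ p ∂ℙ ∧
      ∫ ω, (depth1 ℙ X (X ω)) ^ p ∂ℙ ≤ ((2 : ℝ) ^ p * (p + 1))⁻¹ := by
  set q : Ω → ℝ := fun ω => depth1 ℙ X (X ω)
  have hq : Measurable q := (measurable_depth1 ℙ X).comp hX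
  have hq_tail : ∀ u, ℙ {ω | q ω < u} ≤ ENNReal.ofReal (2 * u) := measure_depth1_comp_lt_le ℙ hX
  have hqp_nonneg : ∀ ω, 0 ≤ q ω ^ p := fun ω => Real.rpow_nonneg (depth1_nonneg ℙ X _) p
  have hbound := lintegral_rpow_le_of_measure_lt_le ℙ hq (fun ω => depth1_nonneg ℙ X _)
    two_pos hp hq_tail
  have hint : Integrable (fun ω => q ω ^ p) ℙ :=
    (lintegral_ofReal_ne_top_iff_integrable (hq.pow_const p).aestronglyMeasurable
      (ae_of_all _ hqp_nonneg)).1 (ne_top_of_le_ne_top ENNReal.ofReal_ne_top hbound)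
  constructor
  · calc (1 : ℝ) = ∫ _, (1 : ℝ) ∂ℙ := by simp
      _ ≤ ∫ ω, q ω ^ p ∂ℙ := integral_mono_ae (integrable_const 1) hint <| by
          filter_upwards [ae_pos_of_measure_lt_le ℙ hq_tail] with ω hω
          exact Real.one_le_rpow_of_pos_of_le_one_of_nonpos hω (depth1_le_one ℙ X _) hp.2.le
  · rw [integral_eq_lintegral_of_nonneg_ae (ae_of_all _ hqp_nonneg)
      (hq.pow_const p).aestronglyMeasurable]
    exact ENNReal.toReal_le_of_le_ofReal
      (inv_nonneg.2 (mul_nonneg (by positivity) (by linarith [hp.1]))) hbound
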